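/- Upper bound on Bohr set size from polynomial growth: Let A be a finite subset of a finite abelian group G, X a random variable supported on A, and suppose parameters d >= 1, eps in (0,1), m, l in N satisfy (1 - eps^2/2)^m <= (1/2) exp(-d log(l m) - 30 d log d) and H(m l X + U_A) - H(U_A) <= d log(m l) + 30 d log d. Then |B(LSpec(l X, eps), 1/2)| <= 8 |A| exp(d log(l m) + 30 d log d), where LSpec(Y, eps) = {gamma : |hat{p_Y}(gamma)|^2 >= 1 - eps^2/2}. -/

import Mathlib

open scoped BigOperators Pointwise
noncomputable section

/-- A finitely supported probability mass function. -/
def IsPMF {α : Type*} (p : α → ℝ) : Prop :=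
  (∀ x, 0 ≤ p x) ∧ (Function.support p).Finite ∧ ∑ᶠ x, p x = 1

/-- Shannon entropy of a pmf. -/
def ent {α : Type*} (p : α → ℝ) : ℝ := ∑ᶠ x, -(p x * Real.log (p x))

/-- Convolution of pmfs: the distribution of the sum of independent random variables. -/
def conv {G : Type*} [AddCommGroup G] (p q : G → ℝ) : G → ℝ :=
  fun z => ∑ᶠ x, p x * q (z - x)

/-- Distribution of the negation. -/
def negp {G : Type*} [AddCommGroup G] (p : G → ℝ) : G → ℝ := fun x => p (-x)

/-- Entropic Ruzsa distance between (the distributions of) two random variables. -/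
def rdist {G : Type*} [AddCommGroup G] (p q : G → ℝ) : ℝ :=
  ent (conv p (negp q)) - ent p / 2 - ent q / 2

/-- Distribution of the sum of `n` iid copies. -/
def iterConv {G : Type*} [AddCommGroup G] (p : G → ℝ) : ℕ → G → ℝ
  | 0 => fun x => Set.indicator ({0} : Set G) (fun _ => (1 : ℝ)) x
  | n + 1 => conv (iterConv p n) p

/-- The Bohr set `B(S, ρ)`. -/
def bohrSet (G : Type*) [AddCommGroup G] (S : Set (AddChar G Circle)) (ρ : ℝ) : Set G :=
  {x | ∀ γ ∈ S, ‖(γ x : ℂ) - 1‖ ≤ ρ}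

/-- The uniform distribution on a finite set `A`. -/
def unif {G : Type*} [DecidableEq G] (A : Finset G) : G → ℝ :=
  fun x => if x ∈ A then (A.card : ℝ)⁻¹ else 0

/-- Fourier coefficient of a density at a character. -/
def fourierAt {G : Type*} [AddCommGroup G] (p : G → ℝ) (γ : AddChar G Circle) : ℂ :=
  ∑ᶠ x, (p x : ℂ) * (starRingEnd ℂ) (γ x : ℂ)

/-- The 99% large spectrum `LSpec(X, ε) = {γ : |p̂_X(γ)|² ≥ 1 - ε²/2}`. -/
def LSpec {G : Type*} [AddCommGroup G] (p : G → ℝ) (ε : ℝ) : Set (AddChar G Circle) :=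
  {γ | 1 - ε ^ 2 / 2 ≤ ‖fourierAt p γ‖ ^ 2}

/-!
Write `r` for the law of `mℓX + U_A`, `Γ = LSpec(ℓX, ε)` and `K = d log(ℓm) + 30 d log d`.
The entropy hypothesis and `‖r‖₂² ≥ e^{-H(r)}` give `‖r‖₂² ≥ e^{-K}/|A|`, so by Plancherel
`∑_γ |r̂(γ)|² ≥ |G| e^{-K}/|A|`. As `r̂ = (p̂_{ℓX})^m · Û_A`, the characters outside `Γ`
contribute at most `(1 - ε²/2)^m |G|/|A| ≤ |G| e^{-K}/(2|A|)`, and each character in `Γ` at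
most `1`; hence `|Γ| ≥ |G| e^{-K}/(2|A|)`. On the other hand `x ↦ ∑_{γ∈Γ} γ(x)` has mean square
`|Γ|` over `G` and real part at least `|Γ|/2` on `B(Γ, 1/2)`, so `|B(Γ, 1/2)| · |Γ| ≤ 4|G|`.
-/

open Finset ComplexConjugate

instance {G : Type*} [AddCommGroup G] [Fintype G] : Fintype (AddChar G Circle) :=
  Fintype.ofEquiv _ AddChar.circleEquivComplex.symm.toEquiv

lemma sum_norm_sum_sq_of_orthogonal {ι α : Type*} [Fintype α] [DecidableEq ι] (s : Finset ι)
    (u : ι → α → ℂ) (N : ℝ)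
    (hu : ∀ i ∈ s, ∀ j ∈ s, ∑ a, u i a * conj (u j a) = if i = j then (N : ℂ) else 0)
    (c : ι → ℂ) :
    ∑ a, ‖∑ i ∈ s, c i * u i a‖ ^ 2 = N * ∑ i ∈ s, ‖c i‖ ^ 2 := by
  apply Complex.ofReal_injective
  push_cast
  simp only [← Complex.mul_conj']
  calc ∑ a, (∑ i ∈ s, c i * u i a) * conj (∑ j ∈ s, c j * u j a)
      = ∑ i ∈ s, ∑ j ∈ s, c i * conj (c j) * ∑ a, u i a * conj (u j a) := by
        simp only [map_sum, map_mul, sum_mul_sum]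
        simp only [mul_sum]
        rw [sum_comm]
        refine sum_congr rfl fun i _ => ?_
        rw [sum_comm]
        exact sum_congr rfl fun j _ => sum_congr rfl fun a _ => by ring
    _ = ∑ i ∈ s, c i * conj (c i) * N := by
        refine sum_congr rfl fun i hi => ?_
        rw [sum_congr rfl fun j hj => by rw [hu i hi j hj]]
        simp only [mul_ite, mul_zero, sum_ite_eq, if_pos hi]
    _ = N * ∑ i ∈ s, c i * conj (c i) := by rw [mul_sum]; exact sum_congr rfl fun i _ => by ring

section Characters
variable {G : Type*} [AddCommGroup G] [Fintype G]

lemma sum_addChar_conj_mul_apply [DecidableEq G] (x y : G) :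
    ∑ γ : AddChar G Circle, conj (γ x : ℂ) * γ y = if x = y then (Fintype.card G : ℂ) else 0 := by
  have h : ∀ γ : AddChar G Circle, conj (γ x : ℂ) * γ y = (γ (y - x) : ℂ) := fun γ => by
    rw [sub_eq_add_neg, AddChar.map_add_eq_mul, AddChar.map_neg_eq_inv, Circle.coe_mul,
      Circle.coe_inv_eq_conj, mul_comm]
  rw [sum_congr rfl fun γ _ => h γ, Fintype.sum_equiv AddChar.circleEquivComplex.toEquiv
      (fun γ => (γ (y - x) : ℂ)) (fun ψ => ψ (y - x)) fun _ => rfl,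
    AddChar.sum_apply_eq_ite]
  simp only [sub_eq_zero, eq_comm]

lemma sum_apply_mul_conj [DecidableEq (AddChar G Circle)] (γ δ : AddChar G Circle) :
    ∑ x, (γ x : ℂ) * conj (δ x : ℂ) = if γ = δ then (Fintype.card G : ℂ) else 0 := by
  have h : ∀ x, (γ x : ℂ) * conj (δ x : ℂ) = AddChar.circleEquivComplex (γ - δ) x := fun x => by
    change _ = ((γ - δ) x : ℂ)
    rw [AddChar.sub_apply, AddChar.map_neg_eq_inv, Circle.coe_mul, Circle.coe_inv_eq_conj]
  classical
  rw [sum_congr rfl fun x _ => h x, AddChar.sum_eq_ite]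
  simp only [EmbeddingLike.map_eq_zero_iff, sub_eq_zero]

end Characters

section Fintype
variable {α : Type*} [Fintype α]

lemma ent_eq_sum (f : α → ℝ) : ent f = ∑ x, -(f x * Real.log (f x)) :=
  finsum_eq_sum_of_fintype _

lemma isPMF_iff {f : α → ℝ} : IsPMF f ↔ (∀ x, 0 ≤ f x) ∧ ∑ x, f x = 1 := by
  simp only [IsPMF, Set.toFinite, true_and, finsum_eq_sum_of_fintype]

lemma IsPMF.exp_neg_ent_le_sum_sq {f : α → ℝ} (hf : IsPMF f) :
    Real.exp (-ent f) ≤ ∑ x, f x ^ 2 := by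
  rw [isPMF_iff] at hf
  have hexp : Real.exp (-ent f) = ∏ x, f x ^ f x := by
    rw [ent_eq_sum, ← sum_neg_distrib, Real.exp_sum]
    refine prod_congr rfl fun x _ => ?_
    rcases (hf.1 x).eq_or_lt with h | h
    · simp [← h]
    · rw [neg_neg, Real.rpow_def_of_pos h, mul_comm]
  calc Real.exp (-ent f) = ∏ x, f x ^ f x := hexp
    _ ≤ ∑ x, f x * f x :=
      Real.geom_mean_le_arith_mean_weighted _ _ _ (fun x _ => hf.1 x) hf.2 fun x _ => hf.1 x
    _ = ∑ x, f x ^ 2 := by simp only [sq]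

end Fintype

section FiniteGroup
variable {G : Type*} [AddCommGroup G] [Fintype G]

lemma conv_apply_eq_sum (f g : G → ℝ) (z : G) : conv f g z = ∑ x, f x * g (z - x) :=
  finsum_eq_sum_of_fintype _

lemma fourierAt_eq_sum (f : G → ℝ) (γ : AddChar G Circle) :
    fourierAt f γ = ∑ x, (f x : ℂ) * conj (γ x : ℂ) :=
  finsum_eq_sum_of_fintype _

lemma sum_conv (f g : G → ℝ) : ∑ z, conv f g z = (∑ x, f x) * ∑ x, g x := by
  simp only [conv_apply_eq_sum, sum_mul_sum]
  rw [sum_comm]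
  refine sum_congr rfl fun x _ => ?_
  exact Fintype.sum_equiv (Equiv.subRight x) _ _ fun z => rfl

lemma IsPMF.conv {f g : G → ℝ} (hf : IsPMF f) (hg : IsPMF g) : IsPMF (conv f g) := by
  rw [isPMF_iff] at *
  refine ⟨fun z => ?_, by rw [sum_conv, hf.2, hg.2, one_mul]⟩
  rw [conv_apply_eq_sum]
  exact sum_nonneg fun x _ => mul_nonneg (hf.1 x) (hg.1 _)

lemma IsPMF.iterConv {f : G → ℝ} (hf : IsPMF f) (n : ℕ) : IsPMF (iterConv f n) := by
  induction n with
  | zero =>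
    classical
    refine isPMF_iff.2 ⟨fun x => Set.indicator_nonneg (fun _ _ => zero_le_one) x, ?_⟩
    simp [_root_.iterConv, Set.indicator_apply]
  | succ n ih => exact ih.conv hf

lemma fourierAt_conv (f g : G → ℝ) (γ : AddChar G Circle) :
    fourierAt (conv f g) γ = fourierAt f γ * fourierAt g γ := by
  simp only [fourierAt_eq_sum, conv_apply_eq_sum, sum_mul_sum]
  push_cast
  simp only [sum_mul]
  rw [sum_comm]
  refine sum_congr rfl fun x _ => Fintype.sum_equiv (Equiv.subRight x) _ _ fun z => ?_
  have hz : (γ z : ℂ) = γ x * γ (z - x) := by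
    rw [← Circle.coe_mul, ← AddChar.map_add_eq_mul, add_sub_cancel]
  simp only [Equiv.subRight_apply, hz, map_mul]
  ring

lemma fourierAt_iterConv (f : G → ℝ) (n : ℕ) (γ : AddChar G Circle) :
    fourierAt (iterConv f n) γ = fourierAt f γ ^ n := by
  induction n with
  | zero =>
    classical
    simp [iterConv, fourierAt_eq_sum, Set.indicator_apply, apply_ite Complex.ofReal, ite_mul]
  | succ n ih => rw [iterConv, fourierAt_conv, ih, pow_succ]

lemma IsPMF.norm_fourierAt_le_one {f : G → ℝ} (hf : IsPMF f) (γ : AddChar G Circle) :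
    ‖fourierAt f γ‖ ≤ 1 := by
  rw [isPMF_iff] at hf
  calc ‖fourierAt f γ‖ ≤ ∑ x, ‖(f x : ℂ) * conj (γ x : ℂ)‖ := by
        rw [fourierAt_eq_sum]; exact norm_sum_le _ _
    _ = ∑ x, f x := sum_congr rfl fun x _ => by simp [abs_of_nonneg (hf.1 x), Circle.norm_coe]
    _ = 1 := hf.2

lemma sum_norm_fourierAt_sq (f : G → ℝ) :
    ∑ γ : AddChar G Circle, ‖fourierAt f γ‖ ^ 2 = Fintype.card G * ∑ x, f x ^ 2 := by
  classical
  simpa [fourierAt_eq_sum] using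
    sum_norm_sum_sq_of_orthogonal univ (fun x (γ : AddChar G Circle) => conj (γ x : ℂ))
      (Fintype.card G) (fun x _ y _ => by simpa using sum_addChar_conj_mul_apply x y)
      (fun x => (f x : ℂ))

end FiniteGroup

section Uniform
variable {α : Type*} [Fintype α] [DecidableEq α]

lemma isPMF_unif {A : Finset α} (hA : A.Nonempty) : IsPMF (unif A) := by
  refine isPMF_iff.2 ⟨fun x => by unfold unif; split <;> positivity, ?_⟩
  simp only [unif, sum_ite_mem, univ_inter, sum_const, nsmul_eq_mul]
  exact mul_inv_cancel₀ (by exact_mod_cast hA.card_pos.ne')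

lemma sum_unif_sq (A : Finset α) : ∑ x, unif A x ^ 2 = (#A : ℝ)⁻¹ := by
  simp only [unif, ite_pow, ne_eq, OfNat.ofNat_ne_zero, not_false_eq_true, zero_pow, sum_ite_mem,
    univ_inter, sum_const, nsmul_eq_mul]
  rcases eq_or_ne (#A : ℝ) 0 with h | h
  · simp [h]
  · field_simp

lemma ent_unif (A : Finset α) : ent (unif A) = Real.log #A := by
  simp only [ent_eq_sum, unif, apply_ite, Real.log_inv, Real.log_zero, mul_neg, ite_mul, zero_mul,
    neg_zero, mul_zero, neg_neg, sum_ite_mem, univ_inter, inter_self, sum_const, nsmul_eq_mul]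
  rcases eq_or_ne (#A : ℝ) 0 with h | h
  · simp [h]
  · field_simp

end Uniform

section Spectrum
variable {G : Type*} [AddCommGroup G]

lemma card_mul_le_norm_sum_of_mem_bohrSet {S : Set (AddChar G Circle)} {ρ : ℝ} {x : G}
    (hx : x ∈ bohrSet G S ρ) {Γ : Finset (AddChar G Circle)} (hΓ : ∀ γ ∈ Γ, γ ∈ S) :
    #Γ * (1 - ρ) ≤ ‖∑ γ ∈ Γ, (γ x : ℂ)‖ :=
  calc (#Γ : ℝ) * (1 - ρ) = ∑ γ ∈ Γ, (1 - ρ) := by rw [sum_const, nsmul_eq_mul]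
    _ ≤ ∑ γ ∈ Γ, (γ x : ℂ).re := sum_le_sum fun γ hγ => by
        have hre : 1 - (γ x : ℂ).re ≤ ‖(γ x : ℂ) - 1‖ := by
          simpa [norm_sub_rev] using Complex.re_le_norm (1 - (γ x : ℂ))
        linarith [hx γ (hΓ γ hγ)]
    _ = (∑ γ ∈ Γ, (γ x : ℂ)).re := (Complex.re_sum _ _).symm
    _ ≤ ‖∑ γ ∈ Γ, (γ x : ℂ)‖ := Complex.re_le_norm _

variable [Fintype G]

lemma natCard_bohrSet_mul_natCard_le (S : Set (AddChar G Circle)) {ρ : ℝ} (hρ : ρ ≤ 1) :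
    (Nat.card (bohrSet G S ρ) : ℝ) * Nat.card S * (1 - ρ) ^ 2 ≤ Fintype.card G := by
  classical
  set Γ := S.toFinset
  set B := (bohrSet G S ρ).toFinset
  have horth : ∑ x, ‖∑ γ ∈ Γ, (γ x : ℂ)‖ ^ 2 = Fintype.card G * #Γ := by
    simpa using sum_norm_sum_sq_of_orthogonal Γ (fun γ x => (γ x : ℂ)) (Fintype.card G)
      (fun γ _ δ _ => sum_apply_mul_conj γ δ) 1
  have hB : #B * (#Γ * (1 - ρ)) ^ 2 ≤ Fintype.card G * #Γ :=
    calc (#B : ℝ) * (#Γ * (1 - ρ)) ^ 2 = ∑ x ∈ B, ((#Γ : ℝ) * (1 - ρ)) ^ 2 := by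
          rw [sum_const, nsmul_eq_mul]
      _ ≤ ∑ x ∈ B, ‖∑ γ ∈ Γ, (γ x : ℂ)‖ ^ 2 := sum_le_sum fun x hx =>
          pow_le_pow_left₀ (mul_nonneg (Nat.cast_nonneg _) (sub_nonneg.2 hρ))
            (card_mul_le_norm_sum_of_mem_bohrSet (Set.mem_toFinset.1 hx)
              fun γ => Set.mem_toFinset.1) 2
      _ ≤ ∑ x, ‖∑ γ ∈ Γ, (γ x : ℂ)‖ ^ 2 :=
          sum_le_sum_of_subset_of_nonneg (subset_univ _) fun _ _ _ => by positivity
      _ = Fintype.card G * #Γ := horth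
  rw [Nat.card_eq_card_toFinset, Nat.card_eq_card_toFinset]
  rcases (#Γ).eq_zero_or_pos with hΓ | hΓ
  · simp [Γ, hΓ]
  · refine le_of_mul_le_mul_right ?_ (by exact_mod_cast hΓ : (0 : ℝ) < #Γ)
    linear_combination hB

lemma card_mul_sum_sq_conv_iterConv_le {p g : G → ℝ} (hp : IsPMF p) (hg : IsPMF g) {ε : ℝ}
    (hε : ε ^ 2 ≤ 2) (m l : ℕ) :
    Fintype.card G * ∑ x, conv (iterConv p (m * l)) g x ^ 2 ≤
      Nat.card (LSpec (iterConv p l) ε) +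
        (1 - ε ^ 2 / 2) ^ m * (Fintype.card G * ∑ x, g x ^ 2) := by
  classical
  set S := LSpec (iterConv p l) ε
  have hc : 0 ≤ 1 - ε ^ 2 / 2 := by linarith
  have hterm : ∀ γ, ‖fourierAt (conv (iterConv p (m * l)) g) γ‖ ^ 2 ≤
      (if γ ∈ S then 1 else 0) + (1 - ε ^ 2 / 2) ^ m * ‖fourierAt g γ‖ ^ 2 := by
    intro γ
    split_ifs with hγ
    · have h1 := pow_le_one₀ (n := 2) (norm_nonneg _)
        (((hp.iterConv (m * l)).conv hg).norm_fourierAt_le_one γ)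
      have h0 : 0 ≤ (1 - ε ^ 2 / 2) ^ m * ‖fourierAt g γ‖ ^ 2 := by positivity
      linarith
    · have hlt : ‖fourierAt (iterConv p l) γ‖ ^ 2 < 1 - ε ^ 2 / 2 := not_le.1 hγ
      rw [zero_add, fourierAt_conv, fourierAt_iterConv, mul_comm m l, pow_mul,
        ← fourierAt_iterConv, norm_mul, norm_pow, mul_pow, ← pow_mul, mul_comm m 2, pow_mul]
      gcongr
  rw [← sum_norm_fourierAt_sq, ← sum_norm_fourierAt_sq, mul_sum]
  calc _ ≤ ∑ γ, ((if γ ∈ S then 1 else 0) + (1 - ε ^ 2 / 2) ^ m * ‖fourierAt g γ‖ ^ 2) :=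
        sum_le_sum fun γ _ => hterm γ
    _ = _ := by rw [sum_add_distrib, sum_boole, Nat.card_eq_fintype_card, Fintype.card_subtype]

lemma card_mul_exp_neg_le_natCard_LSpec [DecidableEq G] {A : Finset G} (hA : A.Nonempty)
    {p : G → ℝ} (hp : IsPMF p) {ε K : ℝ} (hε : ε ^ 2 ≤ 2) {m l : ℕ}
    (hdecay : (1 - ε ^ 2 / 2) ^ m ≤ 1 / 2 * Real.exp (-K))
    (hent : ent (conv (iterConv p (m * l)) (unif A)) ≤ Real.log #A + K) :
    Fintype.card G * Real.exp (-K) ≤ 2 * #A * Nat.card (LSpec (iterConv p l) ε) := by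
  have hA₀ : (0 : ℝ) < #A := by exact_mod_cast hA.card_pos
  have hmass : Real.exp (-K) / #A ≤ ∑ x, conv (iterConv p (m * l)) (unif A) x ^ 2 :=
    calc Real.exp (-K) / #A = Real.exp (-(Real.log #A + K)) := by
          rw [neg_add, Real.exp_add, Real.exp_neg (Real.log _), Real.exp_log hA₀, div_eq_inv_mul]
      _ ≤ _ := Real.exp_le_exp.2 (neg_le_neg hent)
      _ ≤ _ := ((hp.iterConv (m * l)).conv (isPMF_unif hA)).exp_neg_ent_le_sum_sq
  have key := card_mul_sum_sq_conv_iterConv_le hp (isPMF_unif hA) hε m l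
  rw [sum_unif_sq] at key
  have : Fintype.card G * (Real.exp (-K) / #A) ≤
      Nat.card (LSpec (iterConv p l) ε) + 1 / 2 * Real.exp (-K) * (Fintype.card G * (#A : ℝ)⁻¹) :=
    (mul_le_mul_of_nonneg_left hmass (Nat.cast_nonneg _)).trans (key.trans (by gcongr))
  field_simp at this
  linarith

end Spectrum

theorem bohr_upper_bound_general {G : Type*} [AddCommGroup G] [Fintype G] [DecidableEq G]
    (A : Finset G) (hA : A.Nonempty) (p : G → ℝ) (hp : IsPMF p)
    (d ε : ℝ) (m l : ℕ) (hε0 : 0 < ε) (hε1 : ε < 1)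
    (h1 : (1 - ε ^ 2 / 2) ^ m ≤
      (1 / 2) * Real.exp (-(d * Real.log (l * m)) - 30 * d * Real.log d))
    (h2 : ent (conv (iterConv p (m * l)) (unif A)) - ent (unif A) ≤
      d * Real.log (m * l) + 30 * d * Real.log d) :
    (Nat.card (bohrSet G (LSpec (iterConv p l) ε) (1 / 2)) : ℝ) ≤
      8 * A.card * Real.exp (d * Real.log (l * m) + 30 * d * Real.log d) := by
  set K := d * Real.log (l * m) + 30 * d * Real.log d
  have hdecay : (1 - ε ^ 2 / 2) ^ m ≤ 1 / 2 * Real.exp (-K) := by convert h1 using 3; ring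
  have hent : ent (conv (iterConv p (m * l)) (unif A)) ≤ Real.log #A + K := by
    rw [ent_unif, mul_comm (m : ℝ)] at h2
    linarith
  have hspec := card_mul_exp_neg_le_natCard_LSpec hA hp (by nlinarith) hdecay hent
  have hbohr := natCard_bohrSet_mul_natCard_le (LSpec (iterConv p l) ε) (ρ := 1 / 2) (by norm_num)
  set b : ℝ := (Nat.card (bohrSet G (LSpec (iterConv p l) ε) (1 / 2)) : ℝ)
  have hb : b * Real.exp (-K) ≤ 8 * #A := by
    refine le_of_mul_le_mul_right ?_ (by exact_mod_cast Fintype.card_pos : (0 : ℝ) < Fintype.card G)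
    nlinarith [mul_le_mul_of_nonneg_left hspec (Nat.cast_nonneg _ : (0 : ℝ) ≤ b)]
  calc b = b * Real.exp (-K) * Real.exp K := by
        rw [mul_assoc, ← Real.exp_add, neg_add_cancel, Real.exp_zero, mul_one]
    _ ≤ 8 * #A * Real.exp K := by gcongr

/-- upper bound on the size of a Bohr set of the large spectrum,
from entropic polynomial-growth-type hypotheses. -/
theorem bohr_upper_bound {G : Type*} [AddCommGroup G] [Fintype G] [DecidableEq G]
    (A : Finset G) (hA : A.Nonempty) (p : G → ℝ) (hp : IsPMF p)
    (hsupp : Function.support p ⊆ (A : Set G))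
    (d ε : ℝ) (m l : ℕ) (hd : 1 ≤ d) (hε0 : 0 < ε) (hε1 : ε < 1) (hm : 1 ≤ m) (hl : 1 ≤ l)
    (h1 : (1 - ε ^ 2 / 2) ^ m ≤
      (1 / 2) * Real.exp (-(d * Real.log (l * m)) - 30 * d * Real.log d))
    (h2 : ent (conv (iterConv p (m * l)) (unif A)) - ent (unif A) ≤
      d * Real.log (m * l) + 30 * d * Real.log d) :
    (Nat.card (bohrSet G (LSpec (iterConv p l) ε) (1 / 2)) : ℝ) ≤
      8 * A.card * Real.exp (d * Real.log (l * m) + 30 * d * Real.log d) :=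
  bohr_upper_bound_general A hA p hp d ε m l hε0 hε1 h1 h2
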